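/- arXiv:1502.06923 — 2 statements merged into one kernel-verified Lean document; each statement's English description precedes it below -/
import Mathlib

section
/- Let p = 3n + 2 be a prime with n ≥ 0, and let K = 𝔽_p(t). Then the pair (x, y) = ( t^{n+2}/(t−1)^{2n} , t²/(t−1)^{3n} ) satisfies the Weierstrass equation y² + t²(t−1)²·y = x³ over K. -/
/-! The point comes from the Frobenius identity `(t - 1)^p = t^p - 1`: clearing the common
denominator `(t - 1)^(6n)` turns the Weierstrass equation into `t⁴ + t⁴ (t - 1)^p = t^(p + 4)`. -/

theorem pow_four_add_pow_four_mul_sub_one_pow_char {R : Type*} [CommRing R] (p : ℕ)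
    [Fact p.Prime] [CharP R p] (t : R) :
    t ^ 4 + t ^ 4 * (t - 1) ^ p = t ^ (p + 4) := by
  rw [sub_pow_char, one_pow]
  ring

theorem weierstrass_point_of_charP {K : Type*} [Field K] (n : ℕ) [Fact (3 * n + 2).Prime]
    [CharP K (3 * n + 2)] {t : K} (ht : t - 1 ≠ 0) :
    (t ^ 2 / (t - 1) ^ (3 * n)) ^ 2 + t ^ 2 * (t - 1) ^ 2 * (t ^ 2 / (t - 1) ^ (3 * n)) =
      (t ^ (n + 2) / (t - 1) ^ (2 * n)) ^ 3 := by
  field_simp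
  linear_combination (t - 1) ^ (6 * n) * pow_four_add_pow_four_mul_sub_one_pow_char (3 * n + 2) t

theorem RatFunc.X_sub_one_ne_zero (K : Type*) [Field K] : (RatFunc.X : RatFunc K) - 1 ≠ 0 := by
  rw [← RatFunc.algebraMap_X, ← map_one (algebraMap (Polynomial K) (RatFunc K)), ← map_sub]
  exact RatFunc.algebraMap_ne_zero (by simpa using Polynomial.X_sub_C_ne_zero (1 : K))

/-- For a prime `p = 3n+2`, the pair `(t^{n+2}/(t−1)^{2n}, t²/(t−1)^{3n})`
satisfies `y² + t²(t−1)²y = x³` over `𝔽_p(t)`. -/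
theorem section_P_on_isotrivial_fibration (n : ℕ) [Fact (Nat.Prime (3 * n + 2))] :
    let t : RatFunc (ZMod (3 * n + 2)) := RatFunc.X
    let x := t ^ (n + 2) / (t - 1) ^ (2 * n)
    let y := t ^ 2 / (t - 1) ^ (3 * n)
    y ^ 2 + t ^ 2 * (t - 1) ^ 2 * y = x ^ 3 :=
  weierstrass_point_of_charP n (RatFunc.X_sub_one_ne_zero _)
end

section
/- For every natural number n, the monic degree-22 integer polynomial μ_n(x) = x¹¹·φ_n(x + 1/x) satisfies μ_n(1) = −729(3n+2)² < 0, and since μ_n is monic (so μ_n(x) → +∞ as x → +∞), μ_n has a real root α with α > 1. -/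
/-!
Writing `μ_n = x¹¹ φ_n(x + 1/x)` shows at once that `μ_n(1) = φ_n(2)`, which factors as
`-729 (3n + 2)²`, and that `μ_n` is monic because `φ_n` is: the top coefficient of `φ_n`
contributes `(x² + 1)¹¹`, and every other term has lower degree. A monic real polynomial
tends to `+∞`, so the intermediate value theorem gives a root beyond `1`.
-/

open Polynomial

/-- The degree-11 polynomial `φ_n` from which `μ(g*) = x¹¹ φ_n(x + 1/x)` is built. -/
noncomputable def phi (n : ℕ) : Polynomial ℤ :=
  X ^ 11 + C (-1308 - 702 * (n : ℤ) ^ 2 - 1929 * n) * X ^ 10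
    + C (378 * (n : ℤ) ^ 2 - 540 * n - 1404) * X ^ 9
    + C (6696 * (n : ℤ) ^ 2 + 19467 * n + 12900) * X ^ 8
    - C (3780 * (n : ℤ) ^ 2 - 5157 * n - 13414) * X ^ 7
    - C (22545 * (n : ℤ) ^ 2 + 70167 * n + 44646) * X ^ 6
    + C (12987 * (n : ℤ) ^ 2 - 16794 * n - 43992) * X ^ 5
    + C (107487 * (n : ℤ) + 31536 * n ^ 2 + 63852) * X ^ 4
    - C (17442 * (n : ℤ) ^ 2 - 20925 * n - 56020) * X ^ 3
    - C (16443 * (n : ℤ) ^ 2 + 64281 * n + 34254) * X ^ 2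
    + C (-6804 * (n : ℤ) - 20304 + 7128 * n ^ 2) * X
    + C (6804 + 11016 * (n : ℤ) + 2187 * n ^ 2)

/-- The degree-22 polynomial `μ_n(x) = x¹¹ φ_n(x + 1/x)`. -/
noncomputable def mu (n : ℕ) : Polynomial ℤ :=
  ∑ i ∈ Finset.range 12, C ((phi n).coeff i) * X ^ (11 - i) * (X ^ 2 + 1) ^ i

namespace Polynomial

variable {R : Type*} [CommSemiring R]

/-- For `x ≠ 0`, `(p.liftXAddInv d).eval x = x ^ d * p.eval (x + x⁻¹)`. -/
noncomputable def liftXAddInv (p : R[X]) (d : ℕ) : R[X] :=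
  ∑ i ∈ Finset.range (d + 1), C (p.coeff i) * X ^ (d - i) * (X ^ 2 + 1) ^ i

theorem eval_one_liftXAddInv {p : R[X]} {d : ℕ} (hp : p.natDegree ≤ d) :
    (p.liftXAddInv d).eval 1 = p.eval 2 := by
  rw [eval_eq_sum_range' (Nat.lt_succ_of_le hp), liftXAddInv, eval_finsetSum]
  refine Finset.sum_congr rfl fun i _ => ?_
  simp only [eval_mul, eval_C, eval_pow, eval_add, eval_X, eval_one, one_pow, mul_one]
  norm_num

theorem natDegree_C_mul_X_pow_mul_X_sq_add_one_pow_le (c : R) (k i : ℕ) :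
    (C c * X ^ k * (X ^ 2 + 1) ^ i).natDegree ≤ k + 2 * i := by
  compute_degree
  omega

theorem Monic.liftXAddInv [Nontrivial R] {p : R[X]} (hp : p.Monic) :
    (p.liftXAddInv p.natDegree).Monic := by
  set d := p.natDegree
  have hX : (X ^ 2 + 1 : R[X]).Monic := by monicity!
  have hq : ((X ^ 2 + 1 : R[X]) ^ d).Monic := hX.pow d
  have hdeg : ((X ^ 2 + 1 : R[X]) ^ d).degree = (2 * d : ℕ) := by
    rw [degree_eq_natDegree hq.ne_zero, hX.natDegree_pow, mul_comm]
    congr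
    compute_degree!
  rw [Polynomial.liftXAddInv, Finset.sum_range_succ, hp.coeff_natDegree, C_1, one_mul, Nat.sub_self,
    pow_zero, one_mul]
  refine hq.add_of_right ((degree_sum_le _ _).trans_lt ?_)
  rw [hdeg, Finset.sup_lt_iff (WithBot.bot_lt_coe _)]
  intro i hi
  have hid : i < d := Finset.mem_range.1 hi
  refine (degree_le_natDegree.trans (WithBot.coe_le_coe.2
    (natDegree_C_mul_X_pow_mul_X_sq_add_one_pow_le _ _ _))).trans_lt ?_
  exact Nat.cast_lt.2 (show d - i + 2 * i < 2 * d by omega)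

theorem Monic.exists_root_gt_of_eval_neg {p : ℝ[X]} (hp : p.Monic) {a : ℝ}
    (ha : p.eval a < 0) : ∃ α, a < α ∧ p.IsRoot α := by
  have hdeg : 0 < p.degree := by
    by_contra! h
    rw [hp.degree_le_zero_iff_eq_one.1 h, eval_one] at ha
    exact absurd ha (by norm_num)
  have htends := p.tendsto_atTop_of_leadingCoeff_nonneg hdeg (by simp [hp.leadingCoeff])
  obtain ⟨b, hb0, hab⟩ :=
    ((htends.eventually_gt_atTop 0).and (Filter.eventually_gt_atTop a)).exists
  obtain ⟨α, hα, hroot⟩ := intermediate_value_Ioc hab.le p.continuous.continuousOn ⟨ha, hb0.le⟩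
  exact ⟨α, hα.1, hroot⟩

end Polynomial

theorem phi_monic (n : ℕ) : (phi n).Monic := by
  unfold phi
  monicity!

theorem natDegree_phi (n : ℕ) : (phi n).natDegree = 11 := by
  unfold phi
  compute_degree!

theorem phi_eval_two (n : ℕ) : (phi n).eval 2 = -729 * (3 * (n : ℤ) + 2) ^ 2 := by
  simp only [phi, eval_add, eval_sub, eval_mul, eval_pow, eval_C, eval_X]
  ring

theorem mu_eq_liftXAddInv (n : ℕ) : mu n = (phi n).liftXAddInv 11 := rfl

/-- `μ_n(1) = −729(3n+2)² < 0`, and since `μ_n` is monic it has a real root `α > 1`. -/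
theorem mu_has_real_root_gt_one (n : ℕ) :
    (mu n).eval 1 = -729 * (3 * (n : ℤ) + 2) ^ 2 ∧
      (mu n).eval 1 < 0 ∧ (mu n).Monic ∧
      ∃ α : ℝ, 1 < α ∧ Polynomial.aeval α (mu n) = 0 := by
  have heval : (mu n).eval 1 = -729 * (3 * (n : ℤ) + 2) ^ 2 := by
    rw [mu_eq_liftXAddInv, eval_one_liftXAddInv (natDegree_phi n).le, phi_eval_two]
  have hneg : (mu n).eval 1 < 0 := by
    rw [heval]
    exact mul_neg_of_neg_of_pos (by norm_num) (by positivity)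
  have hmonic : (mu n).Monic := by
    simpa only [mu_eq_liftXAddInv, natDegree_phi] using (phi_monic n).liftXAddInv
  have hneg_real : ((mu n).map (Int.castRingHom ℝ)).eval 1 < 0 := by
    rw [eval_map, eval₂_at_one, eq_intCast]
    exact_mod_cast hneg
  obtain ⟨α, hα, hroot⟩ := (hmonic.map (Int.castRingHom ℝ)).exists_root_gt_of_eval_neg hneg_real
  exact ⟨heval, hneg, hmonic, α, hα, by rwa [aeval_def, eval₂_eq_eval_map]⟩
end
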